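/- (Imprecision growth bound) Let E̅₀, E_₀ be the upper and lower expectation functionals of a credal set, T̅, T_ the upper and lower transition operators of an imprecise Markov chain, Iₙ = d(E̅₀∘T̅ⁿ, E_₀∘T_ⁿ) the degree of imprecision at time n, Î = d(T̅, T_) := max_x max_{f∈L₁}((T̅f)(x) - (T_f)(x)), and ρᵢ = ρ(T̅ⁱ). Then Iₙ ≤ I₀·ρₙ + Î·Σ_{i=0}^{n-1} ρᵢ. -/

import Mathlib

open Finset Set

noncomputable section

/-- Functions with values in [0,1]. -/
def L1 (X : Type*) : Set (X → ℝ) := {f | ∀ x, 0 ≤ f x ∧ f x ≤ 1}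

/-- Probability mass function on a finite set. -/
def IsPMF {X : Type*} [Fintype X] (p : X → ℝ) : Prop :=
  (∀ x, 0 ≤ p x) ∧ ∑ x, p x = 1

/-- A credal set: nonempty compact convex set of pmfs. -/
def IsCredal {X : Type*} [Fintype X] (M : Set (X → ℝ)) : Prop :=
  M.Nonempty ∧ IsCompact M ∧ Convex ℝ M ∧ ∀ p ∈ M, IsPMF p

/-- Linear expectation with respect to a pmf. -/
def linExp {X : Type*} [Fintype X] (p f : X → ℝ) : ℝ := ∑ x, p x * f x

/-- Upper expectation functional of a credal set. -/
def upperExp {X : Type*} [Fintype X] (M : Set (X → ℝ)) (f : X → ℝ) : ℝ :=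
  sSup ((fun p => linExp p f) '' M)

/-- Lower expectation functional of a credal set. -/
def lowerExp {X : Type*} [Fintype X] (M : Set (X → ℝ)) (f : X → ℝ) : ℝ :=
  sInf ((fun p => linExp p f) '' M)

/-- Chebyshev (sup) distance between functions. -/
def dCheb {X : Type*} (f g : X → ℝ) : ℝ := ⨆ x, |f x - g x|

/-- Distance between two (upper) expectation functionals. -/
def dFun {X : Type*} (F G : (X → ℝ) → ℝ) : ℝ :=
  sSup ((fun f => |F f - G f|) '' L1 X)

/-- Distance between an upper and a lower expectation functional. -/
def dUL {X : Type*} (F G : (X → ℝ) → ℝ) : ℝ :=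
  sSup ((fun f => F f - G f) '' L1 X)

/-- Upper transition operator: rows are upper expectation functionals. -/
def IsUpperTrans {X : Type*} [Fintype X] (T : (X → ℝ) → (X → ℝ)) : Prop :=
  ∃ M : X → Set (X → ℝ), (∀ x, IsCredal (M x)) ∧ ∀ f x, T f x = upperExp (M x) f

/-- Matching pair of upper and lower transition operators from the same credal sets. -/
def IsTransPair {X : Type*} [Fintype X] (T Tl : (X → ℝ) → (X → ℝ)) : Prop :=
  ∃ M : X → Set (X → ℝ), (∀ x, IsCredal (M x)) ∧
    (∀ f x, T f x = upperExp (M x) f) ∧ (∀ f x, Tl f x = lowerExp (M x) f)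

/-- Distance between two (upper) transition operators. -/
def dOp {X : Type*} (T T' : (X → ℝ) → (X → ℝ)) : ℝ :=
  sSup ((fun f => dCheb (T f) (T' f)) '' L1 X)

/-- Imprecision distance between an upper and a lower transition operator. -/
def dOpUL {X : Type*} (T Tl : (X → ℝ) → (X → ℝ)) : ℝ :=
  sSup ((fun f => ⨆ x, (T f x - Tl f x)) '' L1 X)

/-- Weak coefficient of ergodicity. -/
def rho {X : Type*} (T : (X → ℝ) → (X → ℝ)) : ℝ :=
  sSup {r | ∃ f ∈ L1 X, ∃ x y : X, r = |T f x - T f y|}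

/-!
Both the chain and each row of the transition operators are handled by one inequality for a
credal set `M` whose imprecision on `L1` is at most `D`: if `g` oscillates by at most `r`, then
`g = b + r h` with `h ∈ L1`, so `E̅ g - E_ g ≤ D r`; and if moreover `g ≤ g' + c`, then
`E̅ g - E_ g' ≤ D r + c`. Applied row by row with `g = T̅ⁿ f`, `g' = T_ⁿ f`, it gives by induction
`T̅ⁿ f - T_ⁿ f ≤ Î ∑_{i<n} ρᵢ` pointwise; applied once more to `M₀` it gives the theorem.
-/

section

variable {X : Type*}

lemma apply_sub_apply_le_rho {S : (X → ℝ) → X → ℝ} (hS : MapsTo S (L1 X) (L1 X))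
    {f : X → ℝ} (hf : f ∈ L1 X) (x y : X) : S f x - S f y ≤ rho S := by
  refine (le_abs_self _).trans (le_csSup ⟨1, ?_⟩ ⟨f, hf, x, y, rfl⟩)
  rintro _ ⟨g, hg, x, y, rfl⟩
  rw [abs_sub_le_iff]
  constructor <;> linarith [hS hg x, hS hg y]

variable [Fintype X]

lemma linExp_sub (p f g : X → ℝ) : linExp p (f - g) = linExp p f - linExp p g := by
  simp only [linExp, Pi.sub_apply, mul_sub, sum_sub_distrib]

lemma continuous_linExp (f : X → ℝ) : Continuous fun p : X → ℝ => linExp p f :=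
  continuous_finsetSum _ fun x _ => (continuous_apply x).mul continuous_const

namespace IsPMF

variable {p f : X → ℝ}

lemma linExp_le (hp : IsPMF p) {c : ℝ} (hf : ∀ x, f x ≤ c) : linExp p f ≤ c :=
  calc linExp p f ≤ ∑ x, p x * c :=
        sum_le_sum fun x _ => mul_le_mul_of_nonneg_left (hf x) (hp.1 x)
    _ = c := by rw [← sum_mul, hp.2, one_mul]

lemma le_linExp (hp : IsPMF p) {c : ℝ} (hf : ∀ x, c ≤ f x) : c ≤ linExp p f :=
  calc c = ∑ x, p x * c := by rw [← sum_mul, hp.2, one_mul]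
    _ ≤ linExp p f := sum_le_sum fun x _ => mul_le_mul_of_nonneg_left (hf x) (hp.1 x)

lemma linExp_const_add_mul (hp : IsPMF p) (a b : ℝ) :
    linExp p (fun x => a + b * f x) = a + b * linExp p f := by
  simp only [linExp, mul_add, sum_add_distrib, ← sum_mul, hp.2, one_mul, mul_left_comm _ b,
    ← mul_sum]

end IsPMF

namespace IsCredal

variable {M : Set (X → ℝ)} {f g g' : X → ℝ}

lemma isPMF (hM : IsCredal M) {p : X → ℝ} (hp : p ∈ M) : IsPMF p := hM.2.2.2 p hp

lemma isCompact_image_linExp (hM : IsCredal M) (f : X → ℝ) :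
    IsCompact ((fun p => linExp p f) '' M) :=
  hM.2.1.image (continuous_linExp f)

lemma exists_linExp_eq_upperExp (hM : IsCredal M) (f : X → ℝ) :
    ∃ p ∈ M, linExp p f = upperExp M f :=
  (hM.isCompact_image_linExp f).sSup_mem (hM.1.image _)

lemma exists_linExp_eq_lowerExp (hM : IsCredal M) (f : X → ℝ) :
    ∃ p ∈ M, linExp p f = lowerExp M f :=
  (hM.isCompact_image_linExp f).sInf_mem (hM.1.image _)

lemma linExp_le_upperExp (hM : IsCredal M) {p : X → ℝ} (hp : p ∈ M) (f : X → ℝ) :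
    linExp p f ≤ upperExp M f :=
  le_csSup (hM.isCompact_image_linExp f).bddAbove ⟨p, hp, rfl⟩

lemma lowerExp_le_linExp (hM : IsCredal M) {p : X → ℝ} (hp : p ∈ M) (f : X → ℝ) :
    lowerExp M f ≤ linExp p f :=
  csInf_le (hM.isCompact_image_linExp f).bddBelow ⟨p, hp, rfl⟩

lemma lowerExp_le_upperExp (hM : IsCredal M) (f : X → ℝ) : lowerExp M f ≤ upperExp M f :=
  let ⟨_, hp⟩ := hM.1
  (hM.lowerExp_le_linExp hp f).trans (hM.linExp_le_upperExp hp f)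

lemma upperExp_le (hM : IsCredal M) {c : ℝ} (hf : ∀ x, f x ≤ c) : upperExp M f ≤ c := by
  obtain ⟨p, hp, hpf⟩ := hM.exists_linExp_eq_upperExp f
  exact hpf ▸ (hM.isPMF hp).linExp_le hf

lemma le_lowerExp (hM : IsCredal M) {c : ℝ} (hf : ∀ x, c ≤ f x) : c ≤ lowerExp M f := by
  obtain ⟨p, hp, hpf⟩ := hM.exists_linExp_eq_lowerExp f
  exact hpf ▸ (hM.isPMF hp).le_linExp hf

lemma upperExp_sub_lowerExp_le_one (hM : IsCredal M) (hf : f ∈ L1 X) :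
    upperExp M f - lowerExp M f ≤ 1 := by
  linarith [hM.upperExp_le fun x => (hf x).2, hM.le_lowerExp fun x => (hf x).1]

lemma sub_le_dUL (hM : IsCredal M) (hf : f ∈ L1 X) :
    upperExp M f - lowerExp M f ≤ dUL (upperExp M) (lowerExp M) := by
  refine le_csSup ⟨1, ?_⟩ ⟨f, hf, rfl⟩
  rintro _ ⟨h, hh, rfl⟩
  exact hM.upperExp_sub_lowerExp_le_one hh

lemma lowerExp_sub_lowerExp_le (hM : IsCredal M) {c : ℝ} (hgg' : ∀ x, g x - g' x ≤ c) :
    lowerExp M g - lowerExp M g' ≤ c := by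
  obtain ⟨q, hq, hqg'⟩ := hM.exists_linExp_eq_lowerExp g'
  calc lowerExp M g - lowerExp M g' ≤ linExp q g - linExp q g' :=
        hqg' ▸ sub_le_sub_right (hM.lowerExp_le_linExp hq g) _
    _ = linExp q (g - g') := (linExp_sub q g g').symm
    _ ≤ c := (hM.isPMF hq).linExp_le hgg'

lemma upperExp_sub_lowerExp_le_mul [Nonempty X] (hM : IsCredal M) {D r : ℝ}
    (hD : ∀ h ∈ L1 X, upperExp M h - lowerExp M h ≤ D) (hg : ∀ x y, g x - g y ≤ r) :
    upperExp M g - lowerExp M g ≤ D * r := by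
  obtain ⟨y₀, hy₀⟩ := Finite.exists_min g
  have hr : 0 ≤ r := by simpa using hg y₀ y₀
  set h : X → ℝ := fun x => (g x - g y₀) / r
  have hh : h ∈ L1 X := fun x =>
    ⟨div_nonneg (sub_nonneg.2 (hy₀ x)) hr, div_le_one_of_le₀ (hg x y₀) hr⟩
  -- when `r = 0` the function `g` is constant and `h = 0` by the convention `x / 0 = 0`
  have hgh : ∀ x, g x = g y₀ + r * h x := fun x => by
    rcases hr.eq_or_lt with rfl | hr'
    · simp only [zero_mul, add_zero]; linarith [hg x y₀, hy₀ x]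
    · simp only [h]; field_simp; ring
  have hlin : ∀ p ∈ M, linExp p g = g y₀ + r * linExp p h := fun p hp => by
    rw [← (hM.isPMF hp).linExp_const_add_mul]; exact congrArg _ (funext hgh)
  obtain ⟨p, hp, hpg⟩ := hM.exists_linExp_eq_upperExp g
  obtain ⟨q, hq, hqg⟩ := hM.exists_linExp_eq_lowerExp g
  calc upperExp M g - lowerExp M g = r * (linExp p h - linExp q h) := by
        rw [← hpg, ← hqg, hlin p hp, hlin q hq]; ring
    _ ≤ r * (upperExp M h - lowerExp M h) := by
        gcongr
        exacts [hM.linExp_le_upperExp hp h, hM.lowerExp_le_linExp hq h]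
    _ ≤ r * D := mul_le_mul_of_nonneg_left (hD h hh) hr
    _ = D * r := mul_comm r D

lemma upperExp_sub_lowerExp_le [Nonempty X] (hM : IsCredal M) {D r c : ℝ}
    (hD : ∀ h ∈ L1 X, upperExp M h - lowerExp M h ≤ D) (hg : ∀ x y, g x - g y ≤ r)
    (hgg' : ∀ x, g x - g' x ≤ c) :
    upperExp M g - lowerExp M g' ≤ D * r + c := by
  linarith [hM.upperExp_sub_lowerExp_le_mul hD hg, hM.lowerExp_sub_lowerExp_le hgg']

end IsCredal

namespace IsTransPair

variable {T Tl : (X → ℝ) → X → ℝ}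

lemma mapsTo_L1 (hP : IsTransPair T Tl) : MapsTo T (L1 X) (L1 X) := by
  obtain ⟨M, hM, hT, -⟩ := hP
  intro f hf x
  rw [hT]
  exact ⟨((hM x).le_lowerExp fun y => (hf y).1).trans ((hM x).lowerExp_le_upperExp f),
    (hM x).upperExp_le fun y => (hf y).2⟩

lemma sub_le_dOpUL [Nonempty X] (hP : IsTransPair T Tl) {h : X → ℝ} (hh : h ∈ L1 X) (x : X) :
    T h x - Tl h x ≤ dOpUL T Tl := by
  obtain ⟨M, hM, hT, hTl⟩ := hP
  have hbdd : BddAbove ((fun f => ⨆ x, (T f x - Tl f x)) '' L1 X) := by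
    refine ⟨1, ?_⟩
    rintro _ ⟨f, hf, rfl⟩
    exact ciSup_le fun x => by rw [hT, hTl]; exact (hM x).upperExp_sub_lowerExp_le_one hf
  exact (le_ciSup (Finite.bddAbove_range _) x).trans (le_csSup hbdd ⟨h, hh, rfl⟩)

lemma iterate_sub_iterate_le [Nonempty X] (hP : IsTransPair T Tl) {f : X → ℝ} (hf : f ∈ L1 X)
    (n : ℕ) (x : X) :
    T^[n] f x - Tl^[n] f x ≤ dOpUL T Tl * ∑ i ∈ range n, rho (T^[i]) := by
  induction n generalizing x with
  | zero => simp
  | succ n ih =>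
    have ⟨M, hM, hT, hTl⟩ := hP
    have hrow : ∀ h ∈ L1 X, upperExp (M x) h - lowerExp (M x) h ≤ dOpUL T Tl := fun h hh => by
      rw [← hT, ← hTl]; exact hP.sub_le_dOpUL hh x
    rw [Function.iterate_succ_apply', Function.iterate_succ_apply', hT, hTl, sum_range_succ,
      mul_add, add_comm]
    exact (hM x).upperExp_sub_lowerExp_le hrow
      (apply_sub_apply_le_rho (hP.mapsTo_L1.iterate n) hf) ih

end IsTransPair

end

theorem stmt15 {X : Type*} [Fintype X] [Nonempty X]
    (M0 : Set (X → ℝ)) (h0 : IsCredal M0)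
    (T Tl : (X → ℝ) → (X → ℝ)) (hP : IsTransPair T Tl) (n : ℕ) :
    dUL (fun f => upperExp M0 (T^[n] f)) (fun f => lowerExp M0 (Tl^[n] f)) ≤
      dUL (upperExp M0) (lowerExp M0) * rho (T^[n]) +
        dOpUL T Tl * ∑ i ∈ Finset.range n, rho (T^[i]) := by
  refine csSup_le ⟨_, 0, fun _ => ⟨le_rfl, zero_le_one⟩, rfl⟩ ?_
  rintro _ ⟨f, hf, rfl⟩
  exact h0.upperExp_sub_lowerExp_le (fun _ => h0.sub_le_dUL)
    (apply_sub_apply_le_rho (hP.mapsTo_L1.iterate n) hf) (hP.iterate_sub_iterate_le hf n)
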